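/- arXiv:2409.04845 — 3 statements merged into one kernel-verified Lean document; each statement's English description precedes it below -/
import Mathlib

section
/- Define σ(T) = (Σ_{p∈T} p)^(Σ_{p∈T} p) for a finite multiset T of positive reals, A_k(p₁,…,pₙ) = Π_{S ⊆ {p₁,…,pₙ}, |S|=k} σ(S), and μ(p₁,…,pₙ) = Σ_{k=1}^{n} (−1)^{n−k} log A_k. Then for fixed p₁,…,pₙ > 0 with n ≥ 0, lim_{x→0⁺} μ(p₁,…,pₙ,x) = 0. -/
/-!
Since `t log t → 0` as `t → 0`, each term `(∑ S) log (∑ S)` is continuous in the weights, so the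
limit is the value of `μ` at `x = 0`. There the terms of `S` and `S ∪ {x}` carry the same value
with opposite signs, so they cancel in pairs.
-/

/-- The interior loss measure `μ(p₁,…,pₙ)`: since
`log A_k = ∑_{|S|=k} (∑_{p∈S} p) · log (∑_{p∈S} p)`, we have
`μ = ∑_{∅ ≠ S} (−1)^{n−|S|} (∑ S) log (∑ S)`. -/
noncomputable def mu {n : ℕ} (p : Fin n → ℝ) : ℝ :=
  ∑ S ∈ Finset.univ.powerset.filter (fun S : Finset (Fin n) => S.Nonempty),
    (-1 : ℝ) ^ (n - S.card) * ((∑ i ∈ S, p i) * Real.log (∑ i ∈ S, p i))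

open Finset

theorem Finset.sum_powerset_insert_neg_one_pow_mul_eq_zero {α R : Type*} [DecidableEq α]
    [CommRing R] {s : Finset α} {a : α} (ha : a ∉ s) {m : ℕ} (hm : #s < m)
    (F : Finset α → R) (hF : ∀ t ⊆ s, F (insert a t) = F t) :
    ∑ t ∈ (insert a s).powerset, (-1 : R) ^ (m - #t) * F t = 0 := by
  rw [sum_powerset_insert ha, ← sum_add_distrib]
  refine sum_eq_zero fun t ht => ?_
  have hts : t ⊆ s := mem_powerset.1 ht
  have hsign : m - #t = (m - #(insert a t)) + 1 := by
    have := card_le_card hts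
    rw [card_insert_of_notMem (notMem_mono hts ha)]
    omega
  rw [hF t hts, hsign, pow_succ]
  ring

theorem mu_eq_sum_powerset {n : ℕ} (p : Fin n → ℝ) :
    mu p = ∑ S ∈ univ.powerset,
      (-1 : ℝ) ^ (n - #S) * ((∑ i ∈ S, p i) * Real.log (∑ i ∈ S, p i)) := by
  refine sum_filter_of_ne fun S _ hS => nonempty_of_ne_empty ?_
  rintro rfl
  simp at hS

theorem mu_eq_zero_of_eq_zero {n : ℕ} (p : Fin n → ℝ) (i : Fin n) (hi : p i = 0) :
    mu p = 0 := by
  have hcard : #(univ.erase i) < n := by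
    rw [card_erase_of_mem (mem_univ i), card_univ, Fintype.card_fin]
    exact Nat.sub_lt i.pos one_pos
  rw [mu_eq_sum_powerset, ← insert_erase (mem_univ i)]
  refine sum_powerset_insert_neg_one_pow_mul_eq_zero (notMem_erase i univ) hcard _
    fun t ht => ?_
  rw [sum_insert (notMem_mono ht (notMem_erase i univ)), hi, zero_add]

theorem continuous_mu {n : ℕ} : Continuous (mu : (Fin n → ℝ) → ℝ) := by
  refine continuous_finsetSum _ fun S _ => continuous_const.mul ?_
  exact Real.continuous_mul_log.comp (continuous_finsetSum _ fun i _ => continuous_apply i)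

theorem mu_tendsto_zero_general {n : ℕ} (p : Fin n → ℝ) :
    Filter.Tendsto (fun x : ℝ => mu (Fin.snoc p x))
      (nhdsWithin 0 (Set.Ioi 0)) (nhds 0) := by
  have hcont : Continuous fun x : ℝ => mu (Fin.snoc p x) :=
    continuous_mu.comp (continuous_const.finSnoc continuous_id)
  have hzero : mu (Fin.snoc p (0 : ℝ)) = 0 :=
    mu_eq_zero_of_eq_zero _ (Fin.last n) (Fin.snoc_last _ _)
  simpa only [hzero] using (hcont.tendsto 0).mono_left nhdsWithin_le_nhds

theorem mu_tendsto_zero {n : ℕ} (p : Fin n → ℝ) (hp : ∀ i, 0 < p i) :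
    Filter.Tendsto (fun x : ℝ => mu (Fin.snoc p x))
      (nhdsWithin 0 (Set.Ioi 0)) (nhds 0) :=
  mu_tendsto_zero_general p
end

section
/- For p, q, r > 0, the quantity μ(p,q,r) = (p+q+r)log(p+q+r) − (p+q)log(p+q) − (p+r)log(p+r) − (q+r)log(q+r) + p log p + q log q + r log r is strictly negative; i.e., every 3-atom has negative measure. -/
lemma key_log (a b c : ℝ) (ha : 0 < a) (hb : 0 < b) (hc : 0 < c) :
    Real.log (a + b + c) + Real.log a - Real.log (a + b) - Real.log (a + c) < 0 := by
  have h1 : Real.log ((a + b + c) * a) < Real.log ((a + b) * (a + c)) := by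
    apply Real.log_lt_log (by positivity)
    nlinarith
  rw [Real.log_mul (by positivity) (by positivity),
      Real.log_mul (by positivity) (by positivity)] at h1
  linarith

theorem three_atom_negative (p q r : ℝ) (hp : 0 < p) (hq : 0 < q) (hr : 0 < r) :
    (p + q + r) * Real.log (p + q + r)
      - (p + q) * Real.log (p + q) - (p + r) * Real.log (p + r)
      - (q + r) * Real.log (q + r)
      + p * Real.log p + q * Real.log q + r * Real.log r < 0 := by
  have h1 := key_log p q r hp hq hr
  have h2 := key_log q p r hq hp hr
  have h3 := key_log r p q hr hp hq
  have e2 : q + p + r = p + q + r := by ring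
  have e2' : q + p = p + q := by ring
  have e3 : r + p + q = p + q + r := by ring
  have e3' : r + p = p + r := by ring
  have e3'' : r + q = q + r := by ring
  rw [e2, e2'] at h2
  rw [e3, e3', e3''] at h3
  nlinarith [mul_pos hp hp, mul_neg_of_pos_of_neg hp h1,
    mul_neg_of_pos_of_neg hq h2, mul_neg_of_pos_of_neg hr h3]
end

section
/- For p, q, r > 0, |μ(p,q,r)| < |μ(p,q)|, where μ(p,q) = (p+q)log(p+q) − p log p − q log q and μ(p,q,r) is the alternating inclusion–exclusion sum Σ_{∅≠S⊆{p,q,r}} (−1)^{3−|S|} (Σ S) log(Σ S). That is, the magnitude of a 3-atom's measure is strictly less than that of any 2-atom beneath it. -/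
/-!
Write `φ x = x log x` and `H x = φ (p + q + x) - φ (p + x) - φ (q + x) + φ x`, the mixed second
difference of `φ` with steps `p`, `q`. Then `μ(p,q) = H 0` and `μ(p,q,r) = H r - H 0`.
Strict convexity of `φ` gives `H r > 0`, and strict concavity of `φ' = log + 1` makes `H' < 0`,
so `H r < H 0`. Hence `-μ(p,q) < μ(p,q,r) < 0`.
-/

open Real Set

def mixedDifference {M G : Type*} [Add M] [AddGroup G] (f : M → G) (p q x : M) : G :=
  f (p + q + x) - f (p + x) - f (q + x) + f x

section Convexity

variable {𝕜 : Type*} [Field 𝕜] [LinearOrder 𝕜] [IsStrictOrderedRing 𝕜]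
  {s : Set 𝕜} {f : 𝕜 → 𝕜} {p q x : 𝕜}

theorem StrictConvexOn.mixedDifference_pos (hf : StrictConvexOn 𝕜 s f) (hx : x ∈ s)
    (hxpq : p + q + x ∈ s) (hp : 0 < p) (hq : 0 < q) : 0 < mixedDifference f p q x := by
  -- the chords of `f` over `[x, p + q + x]` lie strictly above `f (p + x)` and `f (q + x)`
  have hp' := hf.secant_strict_mono_aux1 hx hxpq (by linarith : x < p + x) (by linarith)
  have hq' := hf.secant_strict_mono_aux1 hx hxpq (by linarith : x < q + x) (by linarith)
  have hsum : 0 < (p + q) * mixedDifference f p q x := by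
    unfold mixedDifference
    linarith
  exact pos_of_mul_pos_right hsum (by linarith)

theorem StrictConcaveOn.mixedDifference_neg (hf : StrictConcaveOn 𝕜 s f) (hx : x ∈ s)
    (hxpq : p + q + x ∈ s) (hp : 0 < p) (hq : 0 < q) : mixedDifference f p q x < 0 := by
  have := hf.neg.mixedDifference_pos hx hxpq hp hq
  unfold mixedDifference at this ⊢
  simp only [Pi.neg_apply] at this
  linarith

end Convexity

theorem hasDerivAt_mixedDifference {𝕜 F : Type*} [NontriviallyNormedField 𝕜]
    [NormedAddCommGroup F] [NormedSpace 𝕜 F] {f f' : 𝕜 → F} {p q x : 𝕜}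
    (hf : ∀ y ∈ ({p + q + x, p + x, q + x, x} : Set 𝕜), HasDerivAt f (f' y) y) :
    HasDerivAt (mixedDifference f p q) (mixedDifference f' p q x) x := by
  simp only [mem_insert_iff, mem_singleton_iff, forall_eq_or_imp, forall_eq] at hf
  obtain ⟨hpq, hp, hq, h0⟩ := hf
  exact (((hpq.comp_const_add _ _).sub (hp.comp_const_add _ _)).sub
    (hq.comp_const_add _ _)).add h0

theorem strictAntiOn_mixedDifference {f f' : ℝ → ℝ} {p q : ℝ} (hp : 0 < p) (hq : 0 < q)
    (hf : Continuous f) (hf' : ∀ y, 0 < y → HasDerivAt f (f' y) y)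
    (hf'_concave : StrictConcaveOn ℝ (Ioi 0) f') :
    StrictAntiOn (mixedDifference f p q) (Ici 0) := by
  have hcont : Continuous (mixedDifference f p q) := by unfold mixedDifference; fun_prop
  refine strictAntiOn_of_deriv_neg (convex_Ici 0) hcont.continuousOn fun x hx => ?_
  rw [interior_Ici, mem_Ioi] at hx
  have hderiv : HasDerivAt (mixedDifference f p q) (mixedDifference f' p q x) x :=
    hasDerivAt_mixedDifference fun y hy =>
      hf' y (by rcases hy with rfl | rfl | rfl | rfl <;> positivity)
  rw [hderiv.deriv]
  exact hf'_concave.mixedDifference_neg hx (by simp only [mem_Ioi]; positivity) hp hq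

theorem three_atom_magnitude_lt_two_atom (p q r : ℝ)
    (hp : 0 < p) (hq : 0 < q) (hr : 0 < r) :
    |(p + q + r) * Real.log (p + q + r)
      - (p + q) * Real.log (p + q) - (p + r) * Real.log (p + r)
      - (q + r) * Real.log (q + r)
      + p * Real.log p + q * Real.log q + r * Real.log r|
    < |(p + q) * Real.log (p + q) - p * Real.log p - q * Real.log q| := by
  set H := mixedDifference (fun x : ℝ => x * log x) p q
  have hμ₂ : (p + q) * log (p + q) - p * log p - q * log q = H 0 := by
    simp [H, mixedDifference]
  have hμ₃ : (p + q + r) * log (p + q + r) - (p + q) * log (p + q) - (p + r) * log (p + r)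
      - (q + r) * log (q + r) + p * log p + q * log q + r * log r = H r - H 0 := by
    simp only [H, mixedDifference]
    ring_nf
  have hHr_pos : 0 < H r :=
    strictConvexOn_mul_log.mixedDifference_pos hr.le (by simp only [mem_Ici]; positivity) hp hq
  have hHr_lt : H r < H 0 :=
    strictAntiOn_mixedDifference hp hq continuous_mul_log
      (fun y hy => hasDerivAt_mul_log hy.ne')
      (strictConcaveOn_log_Ioi.add_const 1) self_mem_Ici hr.le hr
  rw [hμ₃, hμ₂, abs_of_neg (by linarith), abs_of_pos (by linarith)]
  linarith
end
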